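/- Let F be a pricing function with marginal-rate function G and let f>0 be the unit trading fee. Suppose (α₁,β₁) and (α₂,β₂) satisfy G(β_i)/α_i < 1/(1+f) for i=1,2, with α₁ ≤ α₂ and β₁ ≤ β₂ and (α₁,β₁) ≠ (α₂,β₂). Then φ^A(α₁,β₁) < φ^A(α₂,β₂) and φ^B(α₁,β₁) > φ^B(α₂,β₂); that is, on the region {(α,β) : G(β)/α < 1/(1+f)}, φ^A is strictly increasing and φ^B is strictly decreasing in each of α and β. -/

import Mathlib

/-!
The trade moves the pool along the level set of `F` through `(β, 1)` to the point
`(β (1 - φᴬ), 1 - φᴮ)` on the ray `x = m y`, `m = G⁻¹(α / (1 + f))`.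
Raising `α` lowers `m`, and on a fixed level set a smaller ratio `x / y` means less `x` and
more `y`. Raising `β` to `β'` keeps the ray but raises the level, so `1 - φᴮ` grows; scaling the
old point by `β' / β` lands, by homogeneity, on the level of `(β', β' / β)`, above the new one,
so `(1 - φᴮ) / β` and with it `1 - φᴬ = m (1 - φᴮ) / β` shrink. The general case passes through
`(α₂, β₁)`, which stays in the region because `G > 0`.
-/

open Set Filter Topology

/-- A pricing function `F` with partial derivatives `Fx`, `Fy` and marginal-rate
function `G` (with derivative `G'`), as in Assumption 1 (Pricing Formula):
(i) `F` is continuously differentiable with positive partial derivatives;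
(ii) `Fx/Fy = G(x/y)` where `G` is continuously differentiable, strictly
decreasing (negative derivative), with `G → ∞` at `0⁺` and `G → 0` at `∞`;
(iii) homogeneity of level sets. -/
structure PricingFunction (F Fx Fy : ℝ → ℝ → ℝ) (G G' : ℝ → ℝ) : Prop where
  partialX : ∀ x y : ℝ, 0 < x → 0 < y → HasDerivAt (fun t => F t y) (Fx x y) x
  partialY : ∀ x y : ℝ, 0 < x → 0 < y → HasDerivAt (fun t => F x t) (Fy x y) y
  contX : ContinuousOn (fun p : ℝ × ℝ => Fx p.1 p.2) (Ioi 0 ×ˢ Ioi 0)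
  contY : ContinuousOn (fun p : ℝ × ℝ => Fy p.1 p.2) (Ioi 0 ×ˢ Ioi 0)
  posX : ∀ x y : ℝ, 0 < x → 0 < y → 0 < Fx x y
  posY : ∀ x y : ℝ, 0 < x → 0 < y → 0 < Fy x y
  ratio : ∀ x y : ℝ, 0 < x → 0 < y → Fx x y / Fy x y = G (x / y)
  derivG : ∀ z : ℝ, 0 < z → HasDerivAt G (G' z) z
  contG' : ContinuousOn G' (Ioi 0)
  negG' : ∀ z : ℝ, 0 < z → G' z < 0
  tendstoG0 : Tendsto G (𝓝[>] (0:ℝ)) atTop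
  tendstoGtop : Tendsto G atTop (𝓝 0)
  homog : ∀ x y x' y' c : ℝ, 0 < x → 0 < y → 0 < x' → 0 < y' → 0 < c →
    F x y = F x' y' → F (c * x) (c * y) = F (c * x') (c * y')

namespace PricingFunction

variable {F Fx Fy : ℝ → ℝ → ℝ} {G G' : ℝ → ℝ}

theorem strictMonoOn_left (hF : PricingFunction F Fx Fy G G') {y : ℝ} (hy : 0 < y) :
    StrictMonoOn (fun x => F x y) (Ioi 0) := by
  refine strictMonoOn_of_deriv_pos (convex_Ioi 0)
    (fun x hx => (hF.partialX x y hx hy).continuousAt.continuousWithinAt) fun x hx => ?_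
  rw [interior_Ioi] at hx
  rw [(hF.partialX x y hx hy).deriv]
  exact hF.posX x y hx hy

theorem strictMonoOn_right (hF : PricingFunction F Fx Fy G G') {x : ℝ} (hx : 0 < x) :
    StrictMonoOn (fun y => F x y) (Ioi 0) := by
  refine strictMonoOn_of_deriv_pos (convex_Ioi 0)
    (fun y hy => (hF.partialY x y hx hy).continuousAt.continuousWithinAt) fun y hy => ?_
  rw [interior_Ioi] at hy
  rw [(hF.partialY x y hx hy).deriv]
  exact hF.posY x y hx hy

theorem strictAntiOn_G (hF : PricingFunction F Fx Fy G G') : StrictAntiOn G (Ioi 0) := by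
  refine strictAntiOn_of_deriv_neg (convex_Ioi 0)
    (fun z hz => (hF.derivG z hz).continuousAt.continuousWithinAt) fun z hz => ?_
  rw [interior_Ioi] at hz
  rw [(hF.derivG z hz).deriv]
  exact hF.negG' z hz

theorem G_pos (hF : PricingFunction F Fx Fy G G') {z : ℝ} (hz : 0 < z) : 0 < G z := by
  have hz1 : (0 : ℝ) < z + 1 := by positivity
  have hlim : 0 ≤ G (z + 1) :=
    le_of_tendsto hF.tendstoGtop <| eventually_atTop.2 ⟨z + 1, fun w hw =>
      hF.strictAntiOn_G.antitoneOn hz1 (hz1.trans_le hw) hw⟩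
  exact hlim.trans_lt (hF.strictAntiOn_G hz hz1 (lt_add_one z))

theorem strictAntiOn_of_rightInverse (hF : PricingFunction F Fx Fy G G') {Ginv : ℝ → ℝ}
    (hGinv : ∀ u : ℝ, 0 < u → 0 < Ginv u ∧ G (Ginv u) = u) :
    StrictAntiOn Ginv (Ioi 0) := by
  intro u hu v hv huv
  have h := (hGinv u hu).2 ▸ (hGinv v hv).2 ▸ huv
  exact (hF.strictAntiOn_G.lt_iff_gt (hGinv u hu).1 (hGinv v hv).1).mp h

section LevelSet

variable (hF : PricingFunction F Fx Fy G G') {x₁ y₁ x₂ y₂ : ℝ}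
  (hx₁ : 0 < x₁) (hy₁ : 0 < y₁) (hx₂ : 0 < x₂) (hy₂ : 0 < y₂)
include hF hx₁ hy₁ hx₂ hy₂

theorem le_of_eq_of_le (heq : F x₁ y₁ = F x₂ y₂) (hx : x₁ ≤ x₂) : y₂ ≤ y₁ := by
  by_contra! hy
  have h₁ : F x₁ y₁ ≤ F x₂ y₁ := (hF.strictMonoOn_left hy₁).monotoneOn hx₁ hx₂ hx
  have h₂ : F x₂ y₁ < F x₂ y₂ := hF.strictMonoOn_right hx₂ hy₁ hy₂ hy
  linarith

theorem lt_of_eq_of_lt (heq : F x₁ y₁ = F x₂ y₂) (hx : x₁ < x₂) : y₂ < y₁ := by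
  by_contra! hy
  have h₁ : F x₁ y₁ < F x₂ y₁ := hF.strictMonoOn_left hy₁ hx₁ hx₂ hx
  have h₂ : F x₂ y₁ ≤ F x₂ y₂ := (hF.strictMonoOn_right hx₂).monotoneOn hy₁ hy₂ hy
  linarith

theorem lt_and_lt_of_eq_of_div_lt (heq : F x₁ y₁ = F x₂ y₂) (hr : x₂ / y₂ < x₁ / y₁) :
    x₂ < x₁ ∧ y₁ < y₂ := by
  have hx : x₂ < x₁ := by
    by_contra! hx
    have hy := hF.le_of_eq_of_le hx₁ hy₁ hx₂ hy₂ heq hx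
    rw [div_lt_div_iff₀ hy₂ hy₁] at hr
    nlinarith
  exact ⟨hx, hF.lt_of_eq_of_lt hx₂ hy₂ hx₁ hy₁ heq.symm hx⟩

end LevelSet

theorem strictMonoOn_ray (hF : PricingFunction F Fx Fy G G') {m : ℝ} (hm : 0 < m) :
    StrictMonoOn (fun y => F (m * y) y) (Ioi 0) := by
  intro y₁ hy₁ y₂ hy₂ hy
  have hmy₁ : 0 < m * y₁ := mul_pos hm hy₁
  have hmy₂ : 0 < m * y₂ := mul_pos hm hy₂
  calc F (m * y₁) y₁ < F (m * y₂) y₁ :=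
        hF.strictMonoOn_left hy₁ hmy₁ hmy₂ (mul_lt_mul_of_pos_left hy hm)
    _ < F (m * y₂) y₂ := hF.strictMonoOn_right hmy₂ hy₁ hy₂ hy

section Ray

variable (hF : PricingFunction F Fx Fy G G') {m y y' b b' : ℝ}
  (hm : 0 < m) (hy : 0 < y) (hy' : 0 < y') (hb : 0 < b) (hbb' : b < b')
  (heq : F (m * y) y = F b 1) (heq' : F (m * y') y' = F b' 1)
include hF hm hy hy' hb hbb' heq heq'

theorem lt_of_eq_ray_of_lt : y < y' := by
  refine ((hF.strictMonoOn_ray hm).lt_iff_lt hy hy').mp ?_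
  simp only [heq, heq']
  exact hF.strictMonoOn_left zero_lt_one hb (hb.trans hbb') hbb'

theorem div_lt_div_of_eq_ray_of_lt : y' / b' < y / b := by
  set c := b' / b
  have hc : 1 < c := (one_lt_div hb).mpr hbb'
  have hcy : 0 < c * y := by positivity
  have hscale : F (m * (c * y)) (c * y) = F b' c := by
    have := hF.homog _ _ _ _ c (mul_pos hm hy) hy hb one_pos (by positivity) heq
    rwa [div_mul_cancel₀ b' hb.ne', mul_one, mul_left_comm] at this
  have hlt : y' < c * y := by
    refine ((hF.strictMonoOn_ray hm).lt_iff_lt hy' hcy).mp ?_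
    simp only [heq', hscale]
    exact hF.strictMonoOn_right (hb.trans hbb') (mem_Ioi.mpr one_pos) (zero_lt_one.trans hc) hc
  rw [div_lt_div_iff₀ (hb.trans hbb') hb]
  calc y' * b < c * y * b := mul_lt_mul_of_pos_right hlt hb
    _ = y * b' := by simp only [c]; field_simp

end Ray

end PricingFunction

def IsTradeSolution (F : ℝ → ℝ → ℝ) (G Ginv : ℝ → ℝ) (f : ℝ) (φA φB : ℝ → ℝ → ℝ) : Prop :=
  ∀ α β : ℝ, 0 < α → 0 < β → G β / α < 1 / (1 + f) →
    φA α β ∈ Ioo (0:ℝ) 1 ∧ φB α β < 0 ∧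
    (1 - φA α β) / (1 - φB α β) = (1 / β) * Ginv (α / (1 + f)) ∧
    F (β * (1 - φA α β)) (1 - φB α β) = F β 1

namespace IsTradeSolution

variable {F Fx Fy : ℝ → ℝ → ℝ} {G G' Ginv : ℝ → ℝ} {f : ℝ} {φA φB : ℝ → ℝ → ℝ}
  (hφ : IsTradeSolution F G Ginv f φA φB) {α β : ℝ}
include hφ

theorem div_eq (hα : 0 < α) (hβ : 0 < β) (h : G β / α < 1 / (1 + f)) :
    β * (1 - φA α β) / (1 - φB α β) = Ginv (α / (1 + f)) := by
  rw [mul_div_assoc, (hφ α β hα hβ h).2.2.1, ← mul_assoc, mul_one_div_cancel hβ.ne', one_mul]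

theorem mul_eq (hα : 0 < α) (hβ : 0 < β) (h : G β / α < 1 / (1 + f)) :
    β * (1 - φA α β) = Ginv (α / (1 + f)) * (1 - φB α β) := by
  have hB : 0 < 1 - φB α β := by linarith [(hφ α β hα hβ h).2.1]
  rw [← hφ.div_eq hα hβ h, div_mul_cancel₀ _ hB.ne']

theorem lt_and_gt_of_alpha_lt (hF : PricingFunction F Fx Fy G G')
    (hGinv : ∀ u : ℝ, 0 < u → 0 < Ginv u ∧ G (Ginv u) = u) (hf : 0 < f) {α' : ℝ}
    (hα : 0 < α) (hα' : 0 < α') (hβ : 0 < β) (hαα' : α < α')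
    (h : G β / α < 1 / (1 + f)) (h' : G β / α' < 1 / (1 + f)) :
    φA α β < φA α' β ∧ φB α' β < φB α β := by
  obtain ⟨hA, hB, -, hF₁⟩ := hφ α β hα hβ h
  obtain ⟨hA', hB', -, hF₂⟩ := hφ α' β hα' hβ h'
  have hf1 : 0 < 1 + f := by linarith
  have hratio : Ginv (α' / (1 + f)) < Ginv (α / (1 + f)) :=
    hF.strictAntiOn_of_rightInverse hGinv (div_pos hα hf1) (div_pos hα' hf1)
      (div_lt_div_of_pos_right hαα' hf1)
  obtain ⟨hx, hy⟩ := hF.lt_and_lt_of_eq_of_div_lt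
    (mul_pos hβ (sub_pos.mpr hA.2)) (by linarith) (mul_pos hβ (sub_pos.mpr hA'.2)) (by linarith)
    (hF₁.trans hF₂.symm) (by rwa [hφ.div_eq hα hβ h, hφ.div_eq hα' hβ h'])
  exact ⟨by linarith [lt_of_mul_lt_mul_left hx hβ.le], by linarith⟩

theorem lt_and_gt_of_beta_lt (hF : PricingFunction F Fx Fy G G')
    (hGinv : ∀ u : ℝ, 0 < u → 0 < Ginv u ∧ G (Ginv u) = u) (hf : 0 < f) {β' : ℝ}
    (hα : 0 < α) (hβ : 0 < β) (hβ' : 0 < β') (hββ' : β < β')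
    (h : G β / α < 1 / (1 + f)) (h' : G β' / α < 1 / (1 + f)) :
    φA α β < φA α β' ∧ φB α β' < φB α β := by
  obtain ⟨-, hB, -, hF₁⟩ := hφ α β hα hβ h
  obtain ⟨-, hB', -, hF₂⟩ := hφ α β' hα hβ' h'
  set m := Ginv (α / (1 + f))
  have hm : 0 < m := (hGinv _ (div_pos hα (by linarith))).1
  have hy : 0 < 1 - φB α β := by linarith
  have hy' : 0 < 1 - φB α β' := by linarith
  rw [hφ.mul_eq hα hβ h] at hF₁
  rw [hφ.mul_eq hα hβ' h'] at hF₂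
  have hyy' := hF.lt_of_eq_ray_of_lt hm hy hy' hβ hββ' hF₁ hF₂
  have hdiv := hF.div_lt_div_of_eq_ray_of_lt hm hy hy' hβ hββ' hF₁ hF₂
  have hA : 1 - φA α β = m * ((1 - φB α β) / β) := by
    rw [mul_div_assoc', ← hφ.mul_eq hα hβ h, mul_div_cancel_left₀ _ hβ.ne']
  have hA' : 1 - φA α β' = m * ((1 - φB α β') / β') := by
    rw [mul_div_assoc', ← hφ.mul_eq hα hβ' h', mul_div_cancel_left₀ _ hβ'.ne']
  have := mul_lt_mul_of_pos_left hdiv hm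
  exact ⟨by linarith, by linarith⟩

end IsTradeSolution

/-- Proposition 1(i), monotonicity on the region `G(β)/α < 1/(1+f)`: `φᴬ` is
strictly increasing and `φᴮ` is strictly decreasing in each of `α` and `β`. -/
theorem stmt2 (F Fx Fy : ℝ → ℝ → ℝ) (G G' Ginv : ℝ → ℝ)
    (hF : PricingFunction F Fx Fy G G')
    (hGinv : ∀ u : ℝ, 0 < u → 0 < Ginv u ∧ G (Ginv u) = u)
    (f : ℝ) (hf : 0 < f)
    (φA φB : ℝ → ℝ → ℝ)
    (hφ : ∀ α β : ℝ, 0 < α → 0 < β → G β / α < 1 / (1 + f) →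
      φA α β ∈ Ioo (0:ℝ) 1 ∧ φB α β < 0 ∧
      (1 - φA α β) / (1 - φB α β) = (1 / β) * Ginv (α / (1 + f)) ∧
      F (β * (1 - φA α β)) (1 - φB α β) = F β 1)
    (α₁ β₁ α₂ β₂ : ℝ) (hα₁ : 0 < α₁) (hβ₁ : 0 < β₁) (hα₂ : 0 < α₂) (hβ₂ : 0 < β₂)
    (h₁ : G β₁ / α₁ < 1 / (1 + f)) (h₂ : G β₂ / α₂ < 1 / (1 + f))
    (hαle : α₁ ≤ α₂) (hβle : β₁ ≤ β₂) (hne : (α₁, β₁) ≠ (α₂, β₂)) :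
    φA α₁ β₁ < φA α₂ β₂ ∧ φB α₂ β₂ < φB α₁ β₁ := by
  replace hφ : IsTradeSolution F G Ginv f φA φB := hφ
  have hregion : G β₁ / α₂ < 1 / (1 + f) :=
    (div_le_div_of_nonneg_left (hF.G_pos hβ₁).le hα₁ hαle).trans_lt h₁
  rcases hαle.lt_or_eq with hα | rfl <;> rcases hβle.lt_or_eq with hβ | rfl
  · have hA := hφ.lt_and_gt_of_alpha_lt hF hGinv hf hα₁ hα₂ hβ₁ hα h₁ hregion
    have hB := hφ.lt_and_gt_of_beta_lt hF hGinv hf hα₂ hβ₁ hβ₂ hβ hregion h₂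
    exact ⟨hA.1.trans hB.1, hB.2.trans hA.2⟩
  · exact hφ.lt_and_gt_of_alpha_lt hF hGinv hf hα₁ hα₂ hβ₁ hα h₁ h₂
  · exact hφ.lt_and_gt_of_beta_lt hF hGinv hf hα₁ hβ₁ hβ₂ hβ h₁ h₂
  · exact absurd rfl hne
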